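/- If L ∈ ℝ^{n×n} is (c_L,γ)-SED and M ∈ ℝ^{n×n} is (c_M,γ)-SED away from agent i, then for every integer k ≥ 0 the matrix (Lᵏ)ᵀMLᵏ is ((N·c_L)^{2k}·c_M, γ)-SED away from agent i. -/

import Mathlib

open Matrix

/-- Operator (induced l2) norm of a real matrix. -/
noncomputable def opNorm {α β : Type*} [Fintype α] [Fintype β] [DecidableEq β]
    (X : Matrix α β ℝ) : ℝ :=
  ‖LinearMap.toContinuousLinearMap (Matrix.toEuclideanLin X)‖

/-- Block `(l,j)` of a block-partitioned matrix. -/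
def blk {N : ℕ} {n m : Fin N → ℕ}
    (X : Matrix ((l : Fin N) × Fin (n l)) ((j : Fin N) × Fin (m j)) ℝ)
    (l j : Fin N) : Matrix (Fin (n l)) (Fin (m j)) ℝ :=
  fun a b => X ⟨l, a⟩ ⟨j, b⟩

/-- Block row of agent `i`. -/
def blkRow {N : ℕ} {n m : Fin N → ℕ}
    (K : Matrix ((l : Fin N) × Fin (m l)) ((j : Fin N) × Fin (n j)) ℝ)
    (i : Fin N) : Matrix (Fin (m i)) ((j : Fin N) × Fin (n j)) ℝ :=
  fun a b => K ⟨i, a⟩ b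

/-- Zero-padded version of a diagonal block. -/
def pad {N : ℕ} {n : Fin N → ℕ} (i : Fin N) (M : Matrix (Fin (n i)) (Fin (n i)) ℝ) :
    Matrix ((l : Fin N) × Fin (n l)) ((j : Fin N) × Fin (n j)) ℝ :=
  fun a b => if ha : a.1 = i then (if hb : b.1 = i then M (ha ▸ a.2) (hb ▸ b.2) else 0) else 0

/-- κ-truncation relative to agent `i`. -/
noncomputable def trunc {N : ℕ} {n m : Fin N → ℕ} (dist : Fin N → Fin N → ℝ) (i : Fin N) (κ : ℝ)
    (X : Matrix ((l : Fin N) × Fin (n l)) ((j : Fin N) × Fin (m j)) ℝ) :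
    Matrix ((l : Fin N) × Fin (n l)) ((j : Fin N) × Fin (m j)) ℝ :=
  fun a b => if max (dist i a.1) (dist i b.1) < κ then X a b else 0

/-- `X` is `(c,γ)`-spatially exponentially decaying. -/
def IsSED {N : ℕ} {n m : Fin N → ℕ} (dist : Fin N → Fin N → ℝ) (c γ : ℝ)
    (X : Matrix ((l : Fin N) × Fin (n l)) ((j : Fin N) × Fin (m j)) ℝ) : Prop :=
  ∀ l j : Fin N, opNorm (blk X l j) ≤ c * Real.exp (-γ * dist l j)

/-- `X` is `(c,γ)`-SED away from agent `i`. -/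
def IsSEDAway {N : ℕ} {n m : Fin N → ℕ} (dist : Fin N → Fin N → ℝ) (i : Fin N) (c γ : ℝ)
    (X : Matrix ((l : Fin N) × Fin (n l)) ((j : Fin N) × Fin (m j)) ℝ) : Prop :=
  ∀ l j : Fin N, opNorm (blk X l j) ≤ c * Real.exp (-γ * max (dist i l) (dist i j))

/-- `X` is `(τ,ρ)`-stable. -/
def IsStable {α : Type*} [Fintype α] [DecidableEq α] (τ ρ : ℝ) (X : Matrix α α ℝ) : Prop :=
  ∀ k : ℕ, opNorm (X ^ k) ≤ τ * Real.exp (-ρ * (k : ℝ))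


/-!
Each conjugation `X ↦ Lᵀ X L` costs a factor `(N c_L)²`. In `[X L]_{lj} = ∑ₜ [X]_{lt} [L]_{tj}`
the triangle inequality gives `max (dist i l) (dist i j) ≤ max (dist i l) (dist i t) + dist t j`,
so each of the `N` terms already decays at the target rate; left multiplication reduces to
right multiplication through `Lᵀ X = (Xᵀ L)ᵀ`. Induction on `k` finishes.
-/

open scoped Matrix.Norms.L2Operator

section OpNorm

variable {α β : Type*} [Fintype α] [Fintype β] [DecidableEq β]

theorem opNorm_eq_norm (X : Matrix α β ℝ) : opNorm X = ‖X‖ := rfl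

theorem opNorm_nonneg (X : Matrix α β ℝ) : 0 ≤ opNorm X := norm_nonneg X

theorem opNorm_transpose [DecidableEq α] (X : Matrix α β ℝ) : opNorm Xᵀ = opNorm X := by
  rw [opNorm_eq_norm, opNorm_eq_norm, ← conjTranspose_eq_transpose_of_trivial,
    l2_opNorm_conjTranspose]

theorem opNorm_mul_le_mul_exp {κ : Type*} [Fintype κ] [DecidableEq κ]
    {A : Matrix α β ℝ} {B : Matrix β κ ℝ} {c c' γ a b m : ℝ} (hγ : 0 ≤ γ)
    (hA : opNorm A ≤ c * Real.exp (-γ * a)) (hB : opNorm B ≤ c' * Real.exp (-γ * b))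
    (hm : m ≤ a + b) :
    opNorm (A * B) ≤ c' * c * Real.exp (-γ * m) := by
  have hc : 0 ≤ c := nonneg_of_mul_nonneg_left ((opNorm_nonneg A).trans hA) (Real.exp_pos _)
  have hc' : 0 ≤ c' := nonneg_of_mul_nonneg_left ((opNorm_nonneg B).trans hB) (Real.exp_pos _)
  calc opNorm (A * B) ≤ opNorm A * opNorm B := l2_opNorm_mul A B
    _ ≤ c * Real.exp (-γ * a) * (c' * Real.exp (-γ * b)) :=
      mul_le_mul hA hB (opNorm_nonneg B) ((opNorm_nonneg A).trans hA)
    _ = c' * c * Real.exp (-γ * (a + b)) := by rw [mul_add, Real.exp_add]; ring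
    _ ≤ c' * c * Real.exp (-γ * m) :=
      mul_le_mul_of_nonneg_left (Real.exp_le_exp.mpr (by nlinarith)) (by positivity)

end OpNorm

section Blocks

variable {N : ℕ} {n m p : Fin N → ℕ}

theorem blk_mul (X : Matrix ((l : Fin N) × Fin (n l)) ((j : Fin N) × Fin (m j)) ℝ)
    (Y : Matrix ((l : Fin N) × Fin (m l)) ((j : Fin N) × Fin (p j)) ℝ) (l j : Fin N) :
    blk (X * Y) l j = ∑ t : Fin N, blk X l t * blk Y t j := by
  ext a b
  simp only [blk, mul_apply, Matrix.sum_apply]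
  rw [← Finset.univ_sigma_univ, Finset.sum_sigma]

theorem blk_transpose (X : Matrix ((l : Fin N) × Fin (n l)) ((j : Fin N) × Fin (m j)) ℝ)
    (l j : Fin N) : blk Xᵀ l j = (blk X j l)ᵀ := rfl

variable {dist : Fin N → Fin N → ℝ} {i : Fin N} {c c' γ : ℝ}

theorem IsSEDAway.transpose
    {X : Matrix ((l : Fin N) × Fin (n l)) ((j : Fin N) × Fin (m j)) ℝ}
    (hX : IsSEDAway dist i c γ X) : IsSEDAway dist i c γ Xᵀ := fun l j => by
  rw [blk_transpose, opNorm_transpose, max_comm]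
  exact hX j l

theorem max_dist_le_max_dist_add (hdist_nonneg : ∀ l j, 0 ≤ dist l j)
    (hdist_tri : ∀ l j k, dist l j ≤ dist l k + dist k j) (l j t : Fin N) :
    max (dist i l) (dist i j) ≤ max (dist i l) (dist i t) + dist t j :=
  max_le ((le_max_left _ _).trans (le_add_of_nonneg_right (hdist_nonneg t j)))
    ((hdist_tri i j t).trans (add_le_add_left (le_max_right _ _) _))

theorem IsSEDAway.mul_isSED (hdist_nonneg : ∀ l j, 0 ≤ dist l j)
    (hdist_tri : ∀ l j k, dist l j ≤ dist l k + dist k j) (hγ : 0 ≤ γ)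
    {X : Matrix ((l : Fin N) × Fin (n l)) ((j : Fin N) × Fin (m j)) ℝ}
    {Y : Matrix ((l : Fin N) × Fin (m l)) ((j : Fin N) × Fin (p j)) ℝ}
    (hX : IsSEDAway dist i c γ X) (hY : IsSED dist c' γ Y) :
    IsSEDAway dist i (N * c' * c) γ (X * Y) := fun l j => by
  have hterm (t : Fin N) : opNorm (blk X l t * blk Y t j) ≤
      c' * c * Real.exp (-γ * max (dist i l) (dist i j)) :=
    opNorm_mul_le_mul_exp hγ (hX l t) (hY t j)
      (max_dist_le_max_dist_add hdist_nonneg hdist_tri l j t)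
  calc opNorm (blk (X * Y) l j) ≤ ∑ t : Fin N, opNorm (blk X l t * blk Y t j) := by
        rw [blk_mul]; exact norm_sum_le Finset.univ fun t => blk X l t * blk Y t j
    _ ≤ ∑ _t : Fin N, c' * c * Real.exp (-γ * max (dist i l) (dist i j)) :=
        Finset.sum_le_sum fun t _ => hterm t
    _ = N * c' * c * Real.exp (-γ * max (dist i l) (dist i j)) := by
        rw [Finset.sum_const, Finset.card_univ, Fintype.card_fin, nsmul_eq_mul]; ring

theorem IsSEDAway.conj_isSED (hdist_nonneg : ∀ l j, 0 ≤ dist l j)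
    (hdist_tri : ∀ l j k, dist l j ≤ dist l k + dist k j) (hγ : 0 ≤ γ)
    {X : Matrix ((l : Fin N) × Fin (n l)) ((j : Fin N) × Fin (n j)) ℝ}
    {L : Matrix ((l : Fin N) × Fin (n l)) ((j : Fin N) × Fin (m j)) ℝ}
    (hX : IsSEDAway dist i c γ X) (hL : IsSED dist c' γ L) :
    IsSEDAway dist i ((N * c') ^ 2 * c) γ (Lᵀ * X * L) := by
  have hXL := hX.mul_isSED hdist_nonneg hdist_tri hγ hL
  have h := (hXL.transpose.mul_isSED hdist_nonneg hdist_tri hγ hL).transpose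
  rw [transpose_mul, transpose_transpose, ← Matrix.mul_assoc] at h
  convert h using 1
  ring

end Blocks

theorem SEDAway_conjugate_pow_general
    {N : ℕ} (n : Fin N → ℕ) (dist : Fin N → Fin N → ℝ)
    (hdist_nonneg : ∀ l j, 0 ≤ dist l j)
    (hdist_tri : ∀ l j k, dist l j ≤ dist l k + dist k j)
    (i : Fin N) (cL cM γ : ℝ) (hγ : 0 ≤ γ)
    (L M : Matrix ((l : Fin N) × Fin (n l)) ((j : Fin N) × Fin (n j)) ℝ)
    (hL : IsSED dist cL γ L) (hM : IsSEDAway dist i cM γ M) (k : ℕ) :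
    IsSEDAway dist i (((N : ℝ) * cL) ^ (2 * k) * cM) γ ((L ^ k)ᵀ * M * L ^ k) := by
  induction k with
  | zero => simpa using hM
  | succ k ih =>
    have h := ih.conj_isSED hdist_nonneg hdist_tri hγ hL
    rw [pow_succ, transpose_mul]
    convert h using 1
    · ring
    · simp only [Matrix.mul_assoc]

/-- if `L` is `(c_L,γ)`-SED and `M` is `(c_M,γ)`-SED away from agent `i`,
then for every `k ≥ 0` the matrix `(Lᵏ)ᵀMLᵏ` is `((N c_L)^{2k} c_M, γ)`-SED away from `i`. -/
theorem SEDAway_conjugate_pow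
    {N : ℕ} (n : Fin N → ℕ) (dist : Fin N → Fin N → ℝ)
    (hdist_nonneg : ∀ l j, 0 ≤ dist l j)
    (hdist_symm : ∀ l j, dist l j = dist j l)
    (hdist_tri : ∀ l j k, dist l j ≤ dist l k + dist k j)
    (i : Fin N) (cL cM γ : ℝ) (hγ : 0 ≤ γ)
    (L M : Matrix ((l : Fin N) × Fin (n l)) ((j : Fin N) × Fin (n j)) ℝ)
    (hL : IsSED dist cL γ L) (hM : IsSEDAway dist i cM γ M) (k : ℕ) :
    IsSEDAway dist i (((N : ℝ) * cL) ^ (2 * k) * cM) γ ((L ^ k)ᵀ * M * L ^ k) :=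
  SEDAway_conjugate_pow_general n dist hdist_nonneg hdist_tri i cL cM γ hγ L M hL hM k
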